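/- arXiv:1512.06718 — 3 statements merged into one kernel-verified Lean document; each statement's English description precedes it below -/
import Mathlib

section
/- Fix a natural number p₀. Then, as q → ∞, the ratio C(p₀, q) / ( (1/√π)·(1/p₀!)·16^{p₀} · q^{p₀ − 3/2} · 4^q ) tends to 1; that is, C(p₀, q) is asymptotically equivalent to (1/√π)·(1/p₀!)·16^{p₀} · q^{p₀ − 3/2} · 4^q. -/
/-!
Writing `C(p, q) = (2q + 4p)! / (p! · q! · (q + 3p + 1)!)`, a shifted factorial satisfies
`(n + k)! ∼ n! · n^k` for fixed `k` (the ascending factorial is a monic polynomial of degree `k`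
in `n`), so `C(p, q) ∼ binom(2q, q) · (2q)^{4p} / (p! · q^{3p+1})`, and Stirling's formula gives
`binom(2q, q) ∼ 4^q / √(π q)`.
-/

open Filter Real

noncomputable def melonC (p q : ℕ) : ℝ :=
  (Nat.factorial (4 * p + 2 * q) : ℝ) /
    ((Nat.factorial p : ℝ) * (Nat.factorial q : ℝ) * (Nat.factorial (3 * p + q + 1) : ℝ))

open Asymptotics Polynomial Nat

theorem ascFactorial_succ_isEquivalent_pow (k : ℕ) :
    (fun n : ℕ ↦ ((n + 1).ascFactorial k : ℝ)) ~[atTop] fun n ↦ (n : ℝ) ^ k := by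
  set P : ℝ[X] := (ascPochhammer ℝ k).comp (X + C 1)
  have hmonic : P.Monic := (monic_ascPochhammer ℝ k).comp_X_add_C 1
  have hdeg : P.natDegree = k := by
    rw [natDegree_comp, ascPochhammer_natDegree, natDegree_X_add_C, mul_one]
  have heval (n : ℕ) : P.eval (n : ℝ) = ((n + 1).ascFactorial k : ℝ) := by
    simp [P, ← ascPochhammer_nat_eq_natCast_ascFactorial]
  have hP := (isEquivalent_atTop_lead P).comp_tendsto tendsto_natCast_atTop_atTop
  simpa [Function.comp_def, hmonic.leadingCoeff, hdeg, heval] using hP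

theorem factorial_add_isEquivalent (k : ℕ) :
    (fun n : ℕ ↦ ((n + k)! : ℝ)) ~[atTop] fun n ↦ (n ! : ℝ) * (n : ℝ) ^ k := by
  have h := (IsEquivalent.refl (u := fun n : ℕ ↦ (n ! : ℝ))).mul
    (ascFactorial_succ_isEquivalent_pow k)
  exact h.congr_left (Eventually.of_forall fun n ↦ by simp [← factorial_mul_ascFactorial])

theorem cast_centralBinom {K : Type*} [DivisionRing K] [CharZero K] (n : ℕ) :
    (n.centralBinom : K) = (2 * n)! / (n ! * n !) := by
  rw [centralBinom_eq_two_mul_choose, Nat.cast_choose K (by omega : n ≤ 2 * n),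
    show 2 * n - n = n by omega]

theorem centralBinom_isEquivalent :
    (fun n : ℕ ↦ (n.centralBinom : ℝ)) ~[atTop] fun n ↦ 4 ^ n / √(π * n) := by
  have h2n : Tendsto (fun n : ℕ ↦ 2 * n) atTop atTop := tendsto_id.const_mul_atTop' two_pos
  have h := (Stirling.factorial_isEquivalent_stirling.comp_tendsto h2n).div
    (Stirling.factorial_isEquivalent_stirling.pow 2)
  refine (h.congr_left (Eventually.of_forall fun n ↦ ?_)).congr_right ?_
  · simp [cast_centralBinom, sq]
  · filter_upwards [eventually_gt_atTop 0] with n hn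
    have hsqrt : √(2 * ((2 * n : ℕ) : ℝ) * π) = 2 * √(π * n) := by
      rw [show 2 * ((2 * n : ℕ) : ℝ) * π = 2 ^ 2 * (π * n) by push_cast; ring,
        sqrt_mul (by positivity), sqrt_sq zero_le_two]
    have hsq : √(π * n) ^ 2 = π * n := sq_sqrt (by positivity)
    simp only [Function.comp_apply, Pi.div_apply, Pi.pow_apply]
    rw [hsqrt, show (4 : ℝ) ^ n = 2 ^ (2 * n) by rw [pow_mul]; norm_num]
    push_cast
    rw [div_eq_div_iff (by positivity) (by positivity), mul_pow, sq_sqrt (by positivity)]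
    linear_combination 2 * (2 * (n : ℝ) / rexp 1) ^ (2 * n) * hsq

theorem melonC_isEquivalent (p : ℕ) :
    (fun q ↦ melonC p q) ~[atTop] fun q : ℕ ↦ (1 / √π) * (1 / (p ! : ℝ)) * 16 ^ p *
      (q : ℝ) ^ ((p : ℝ) - 3 / 2) * 4 ^ q := by
  have h2q : Tendsto (fun q : ℕ ↦ 2 * q) atTop atTop := tendsto_id.const_mul_atTop' two_pos
  have hnum := (factorial_add_isEquivalent (4 * p)).comp_tendsto h2q
  have hden := (IsEquivalent.refl (u := fun q : ℕ ↦ (p ! * q ! : ℝ))).mul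
    (factorial_add_isEquivalent (3 * p + 1))
  have hbinom := centralBinom_isEquivalent.mul
    (IsEquivalent.refl (u := fun q : ℕ ↦ (2 * q : ℝ) ^ (4 * p) / (p ! * (q : ℝ) ^ (3 * p + 1))))
  refine (((hnum.div hden).congr_left ?_).congr_right ?_).trans (hbinom.congr_right ?_)
  · refine Eventually.of_forall fun q ↦ ?_
    simp only [melonC, Function.comp_apply, Pi.div_apply, Pi.mul_apply]
    rw [add_comm (4 * p), show 3 * p + q + 1 = q + (3 * p + 1) by ring, mul_assoc]
  · filter_upwards [eventually_gt_atTop 0] with q hq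
    simp only [Function.comp_apply, Pi.div_apply, Pi.mul_apply, cast_centralBinom]
    push_cast
    field_simp
  · filter_upwards [eventually_gt_atTop 0] with q hq
    have hq' : (0 : ℝ) < q := by exact_mod_cast hq
    simp only [Pi.mul_apply]
    rw [rpow_sub hq', rpow_natCast, show (3 / 2 : ℝ) = 1 + 1 / 2 by norm_num, rpow_add hq',
      rpow_one, ← sqrt_eq_rpow, sqrt_mul pi_nonneg, mul_pow, pow_mul (2 : ℝ) 4 p]
    norm_num
    field_simp
    ring

/-- For fixed `p₀`, as `q → ∞`,
`C(p₀, q) ∼ (1/√π)·(1/p₀!)·16^{p₀} · q^{p₀ − 3/2} · 4^q`. -/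
theorem melonC_asymptotic_fixed_p (p₀ : ℕ) :
    Tendsto (fun q : ℕ =>
        melonC p₀ q /
          ((1 / Real.sqrt Real.pi) * (1 / (Nat.factorial p₀ : ℝ)) * 16 ^ p₀ *
            (q : ℝ) ^ ((p₀ : ℝ) - 3 / 2) * (4 : ℝ) ^ q))
      atTop (nhds 1) := by
  refine (isEquivalent_iff_tendsto_one ?_).mp (melonC_isEquivalent p₀)
  filter_upwards [eventually_gt_atTop 0] with q hq
  positivity
end

section
/- Let μ ≥ 0 be real, let G_c(μ) be the unique real root x > 1 of −3x³ + 4x² − μx + 2μ = 0, set g_c(μ) = (G_c(μ) − 1)/(G_c(μ)²·(G_c(μ)² + μ)) and K(μ) = √( G_c(μ)²·(G_c(μ)² + μ) / (6·G_c(μ)² + μ) ). Let S_μ(g) = ∑_{n=0}^{∞} α_n(μ)·g^n. Then, as g tends to g_c(μ) from the left, the quotient (G_c(μ) − S_μ(g)) / √(1 − g/g_c(μ)) tends to K(μ); in particular K(μ) > 0 and S_μ has a square-root singularity at g_c(μ). -/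
open Filter

/-- `α_n(μ) = ∑_{q=0}^{n} μ^q/(3n − 2q + 1) · C(n,q) · C(4n − 2q, n)`, the
coefficient of `g^n` in the leading-order two-point function `G_LO(g, μ)`. -/
noncomputable def alphaCoeff (μ : ℝ) (n : ℕ) : ℝ :=
  ∑ q ∈ Finset.range (n + 1),
    μ ^ q / (3 * (n : ℝ) - 2 * (q : ℝ) + 1) * (Nat.choose n q : ℝ) *
      (Nat.choose (4 * n - 2 * q) n : ℝ)

/-!
Writing `G = 1 + W`, the series `W` solves `W = X φ(W)` with `φ(w) = (1 + w)⁴ + μ (1 + w)²`, and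
Lagrange–Bürmann inversion `[xⁿ] W = [wⁿ⁻¹] φⁿ / n` gives exactly `α_n(μ)`; hence
`G_LO = 1 + g (G_LO⁴ + μ G_LO²)`. The coefficients are nonnegative, so for `0 ≤ g ≤ g_c` the
partial sums of `S_μ(g)` stay below the supersolution `G_c` of `x = 1 + g (x⁴ + μ x²)`: the series
converges, and its sum `S` satisfies `g = (S - 1) / (S⁴ + μ S²)`. This function of `S` increases on
`[1, G_c]` up to `g_c` at `G_c`, where the cubic equation makes its derivative vanish. Hence
`S → G_c` as `g → g_c⁻`, and `1 - g / g_c` has a double zero at `S = G_c`, so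
`G_c - S ~ K √(1 - g / g_c)`.
-/

open PowerSeries Topology
open scoped Polynomial
open Finset.HasAntidiagonal (antidiagonal mem_antidiagonal)

theorem sum_range_sum_antidiagonal_le {M : Type*} [AddCommMonoid M] [PartialOrder M]
    [IsOrderedAddMonoid M] {F : ℕ × ℕ → M} (hF : ∀ p, 0 ≤ F p) (N : ℕ) :
    ∑ n ∈ Finset.range N, ∑ p ∈ antidiagonal n, F p ≤
      ∑ p ∈ Finset.range N ×ˢ Finset.range N, F p := by
  have hinj :
      Set.InjOn (fun x : (_ : ℕ) × ℕ × ℕ => x.2) ↑((Finset.range N).sigma antidiagonal) := by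
    rintro ⟨n, p⟩ hp ⟨m, q⟩ hq (rfl : p = q)
    simp only [Finset.coe_sigma, Set.mem_sigma_iff, Finset.mem_coe, mem_antidiagonal] at hp hq
    rw [← hp.2, hq.2]
  rw [Finset.sum_sigma', ← Finset.sum_image hinj]
  refine Finset.sum_le_sum_of_subset_of_nonneg ?_ fun p _ _ => hF p
  intro p hp
  simp only [Finset.mem_image, Finset.mem_sigma, Finset.mem_range, mem_antidiagonal] at hp
  obtain ⟨⟨n, q⟩, ⟨hn, hq⟩, rfl⟩ := hp
  dsimp only at hn hq ⊢
  simp only [Finset.mem_product, Finset.mem_range]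
  omega

namespace PowerSeries

section CommRing

variable {R : Type*} [CommRing R]

theorem X_pow_succ_dvd_X_mul_aeval_sub {v w : R⟦X⟧} {k : ℕ} (h : X ^ k ∣ v - w) (φ : R[X]) :
    X ^ (k + 1) ∣ X * Polynomial.aeval v φ - X * Polynomial.aeval w φ := by
  rw [← mul_sub, pow_succ']
  refine mul_dvd_mul_left X (h.trans ?_)
  simpa only [Polynomial.eval_map_algebraMap] using
    Polynomial.sub_dvd_eval_sub v w (φ.map (algebraMap R R⟦X⟧))

theorem exists_eq_X_mul_aeval (φ : R[X]) : ∃ W : R⟦X⟧, W = X * Polynomial.aeval W φ := by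
  set u : ℕ → R⟦X⟧ := fun k => (fun w => X * Polynomial.aeval w φ)^[k] 0
  have hu : ∀ k, u (k + 1) = X * Polynomial.aeval (u k) φ := fun k =>
    Function.iterate_succ_apply' _ _ _
  have hstep : ∀ k, X ^ (k + 1) ∣ u (k + 1) - u k := by
    intro k
    induction k with
    | zero => simp [u]
    | succ k ih => simpa only [← hu] using X_pow_succ_dvd_X_mul_aeval_sub ih φ
  have hstable : ∀ k j, k ≤ j → X ^ (k + 1) ∣ u j - u k := by
    intro k j hkj
    induction j, hkj using Nat.le_induction with
    | base => simp
    | succ j hkj ih =>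
      rw [← sub_add_sub_cancel]
      exact dvd_add ((pow_dvd_pow X (by omega)).trans (hstep j)) ih
  set W : R⟦X⟧ := mk fun n => coeff n (u n)
  have hW : ∀ k, X ^ (k + 1) ∣ W - u k := by
    refine fun k => X_pow_dvd_iff.2 fun m hm => ?_
    have := X_pow_dvd_iff.1 (hstable m k (by omega)) m (by omega)
    rw [map_sub, sub_eq_zero] at this ⊢
    rw [coeff_mk, this]
  refine ⟨W, sub_eq_zero.1 (ext fun n => ?_)⟩
  have h : X ^ (n + 2) ∣ W - X * Polynomial.aeval W φ := by
    have := dvd_sub (hW (n + 1)) (X_pow_succ_dvd_X_mul_aeval_sub (hW n) φ)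
    rwa [← hu, sub_sub_sub_cancel_right] at this
  simpa using X_pow_dvd_iff.1 h n (by omega)

variable {φ : R[X]} {W : R⟦X⟧}

theorem pow_eq_X_pow_mul_aeval (hW : W = X * Polynomial.aeval W φ) (k : ℕ) :
    W ^ k = X ^ k * Polynomial.aeval W (φ ^ k) := by
  conv_lhs => rw [hW]
  rw [mul_pow, map_pow]

theorem coeff_zero_aeval (hW : W = X * Polynomial.aeval W φ) (p : R[X]) :
    coeff 0 (Polynomial.aeval W p) = p.coeff 0 := by
  have h0 : constantCoeff W = 0 := by rw [hW]; simp
  induction p using Polynomial.induction_on' with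
  | add p q hp hq => rw [map_add, map_add, hp, hq, Polynomial.coeff_add]
  | monomial k a => cases k <;> simp [Polynomial.aeval_monomial, h0]

end CommRing

variable {K : Type*} [Field K] [CharZero K] {φ : K[X]} {W : K⟦X⟧}

theorem lagrange_burmann (hW : W = X * Polynomial.aeval W φ) {n : ℕ} (hn : 1 ≤ n) (q : K[X]) :
    (n : K) * coeff n (Polynomial.aeval W q) = (Polynomial.derivative q * φ ^ n).coeff (n - 1) := by
  induction n using Nat.strong_induction_on generalizing q with
  | _ n ih =>
  have hpow : ∀ k, (n : K) * coeff n (W ^ k) =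
      (Polynomial.derivative (Polynomial.X ^ k) * φ ^ n).coeff (n - 1) := by
    intro k
    rw [Polynomial.derivative_X_pow, pow_eq_X_pow_mul_aeval hW, coeff_X_pow_mul', mul_assoc,
      Polynomial.coeff_C_mul, Polynomial.coeff_X_pow_mul']
    rcases Nat.eq_zero_or_pos k with rfl | hk
    · simp [coeff_one, show n ≠ 0 by omega]
    by_cases hkn : k ≤ n
    swap
    · rw [if_neg hkn, if_neg (by omega)]; simp
    rw [if_pos hkn, if_pos (by omega), show n - 1 - (k - 1) = n - k by omega]
    obtain ⟨m, rfl⟩ : ∃ m, n = k + m := ⟨n - k, by omega⟩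
    rw [Nat.add_sub_cancel_left]
    rcases Nat.eq_zero_or_pos m with rfl | hm
    · simp only [add_zero, coeff_zero_aeval hW]
    -- compare the induction hypothesis for `φ ^ k` at `m` with `(φ ^ n)' = n φ ^ (n - 1) φ'`
    have hd : Polynomial.derivative (φ ^ k) * φ ^ m =
        Polynomial.C (k : K) * (φ ^ (k + m - 1) * Polynomial.derivative φ) := by
      rw [Polynomial.derivative_pow, show k + m - 1 = k - 1 + m by omega, pow_add]; ring
    have hc := ih m (by omega) hm (φ ^ k)
    have he := Polynomial.coeff_derivative (φ ^ (k + m)) (m - 1)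
    rw [hd, Polynomial.coeff_C_mul] at hc
    rw [Polynomial.derivative_pow, mul_assoc, Polynomial.coeff_C_mul, Nat.sub_add_cancel hm,
      Nat.cast_pred hm, sub_add_cancel] at he
    have hm0 : (m : K) ≠ 0 := by exact_mod_cast hm.ne'
    apply mul_left_cancel₀ hm0
    push_cast at he hc ⊢
    linear_combination (k + m : K) * hc + k * he
  induction q using Polynomial.induction_on' with
  | add p q hp hq => simp only [map_add, add_mul, Polynomial.coeff_add, mul_add, hp, hq]
  | monomial k a =>
    rw [← Polynomial.C_mul_X_pow_eq_monomial, map_mul, Polynomial.aeval_C, map_pow,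
      Polynomial.aeval_X, Polynomial.derivative_C_mul, mul_assoc, Polynomial.coeff_C_mul, ← hpow,
      ← Algebra.smul_def, map_smul, smul_eq_mul]
    ring

theorem coeff_eq_of_eq_X_mul_aeval (hW : W = X * Polynomial.aeval W φ) {n : ℕ} (hn : 1 ≤ n) :
    coeff n W = (φ ^ n).coeff (n - 1) / n := by
  have h := lagrange_burmann hW hn Polynomial.X
  rw [Polynomial.aeval_X, Polynomial.derivative_X, one_mul] at h
  rw [eq_div_iff (Nat.cast_ne_zero.2 (by omega)), mul_comm, h]

theorem coeff_mul_mul_pow {R : Type*} [CommSemiring R] (f h : R⟦X⟧) (g : R) (n : ℕ) :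
    coeff n (f * h) * g ^ n =
      ∑ p ∈ antidiagonal n, (coeff p.1 f * g ^ p.1) * (coeff p.2 h * g ^ p.2) := by
  rw [coeff_mul, Finset.sum_mul]
  refine Finset.sum_congr rfl fun p hp => ?_
  rw [← mem_antidiagonal.1 hp, pow_add]
  ring

section OrderedSemiring

variable {R : Type*} [CommSemiring R] [PartialOrder R] [IsOrderedRing R]

theorem coeff_mul_nonneg {f h : R⟦X⟧} (hf : ∀ n, 0 ≤ coeff n f) (hh : ∀ n, 0 ≤ coeff n h) (n : ℕ) :
    0 ≤ coeff n (f * h) := by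
  rw [coeff_mul]
  exact Finset.sum_nonneg fun p _ => mul_nonneg (hf p.1) (hh p.2)

theorem sum_range_coeff_mul_mul_pow_le {f h : R⟦X⟧} (hf : ∀ n, 0 ≤ coeff n f)
    (hh : ∀ n, 0 ≤ coeff n h) {g : R} (hg : 0 ≤ g) (N : ℕ) :
    ∑ n ∈ Finset.range N, coeff n (f * h) * g ^ n ≤
      (∑ n ∈ Finset.range N, coeff n f * g ^ n) * ∑ n ∈ Finset.range N, coeff n h * g ^ n := by
  simp only [coeff_mul_mul_pow, Finset.sum_mul_sum, ← Finset.sum_product']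
  exact sum_range_sum_antidiagonal_le (fun p =>
    mul_nonneg (mul_nonneg (hf _) (pow_nonneg hg _)) (mul_nonneg (hh _) (pow_nonneg hg _))) N

end OrderedSemiring

theorem hasSum_coeff_mul_mul_pow {f h : ℝ⟦X⟧} {g a b : ℝ}
    (hf : HasSum (fun n => coeff n f * g ^ n) a) (hh : HasSum (fun n => coeff n h * g ^ n) b) :
    HasSum (fun n => coeff n (f * h) * g ^ n) (a * b) := by
  have hf' : Summable fun n => ‖coeff n f * g ^ n‖ := summable_norm_iff.2 hf.summable
  have hh' : Summable fun n => ‖coeff n h * g ^ n‖ := summable_norm_iff.2 hh.summable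
  have hfh := (summable_norm_sum_mul_antidiagonal_of_summable_norm hf' hh').of_norm.hasSum
  rw [← tsum_mul_tsum_eq_tsum_sum_antidiagonal_of_summable_norm hf' hh', hf.tsum_eq,
    hh.tsum_eq] at hfh
  rwa [funext (coeff_mul_mul_pow f h g)]

end PowerSeries

theorem coeff_pow_div_eq_alphaCoeff (μ : ℝ) {n : ℕ} (hn : 1 ≤ n) :
    (((Polynomial.X + 1) ^ 4 + Polynomial.C μ * (Polynomial.X + 1) ^ 2) ^ n).coeff (n - 1) / n =
      alphaCoeff μ n := by
  have hexp : ((Polynomial.X + 1) ^ 4 + Polynomial.C μ * (Polynomial.X + 1) ^ 2) ^ n =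
      ∑ q ∈ Finset.range (n + 1),
        Polynomial.C (μ ^ q * n.choose q) * (Polynomial.X + 1) ^ (4 * n - 2 * q) := by
    rw [add_comm, add_pow]
    refine Finset.sum_congr rfl fun q hq => ?_
    rw [mul_pow, ← pow_mul, ← pow_mul, map_mul, map_pow, map_natCast,
      show 4 * n - 2 * q = 2 * q + 4 * (n - q) by grind, pow_add]
    ring
  rw [hexp, Polynomial.finsetSum_coeff, Finset.sum_div, alphaCoeff]
  refine Finset.sum_congr rfl fun q hq => ?_
  have hq : q ≤ n := Nat.lt_succ_iff.1 (Finset.mem_range.1 hq)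
  have hchoose : ((4 * n - 2 * q).choose n : ℝ) * n =
      (4 * n - 2 * q).choose (n - 1) * (3 * (n : ℝ) - 2 * q + 1) := by
    have h := Nat.choose_succ_right_eq (4 * n - 2 * q) (n - 1)
    rw [Nat.sub_add_cancel hn, show 4 * n - 2 * q - (n - 1) = 3 * n - 2 * q + 1 by omega] at h
    have hcast : ((3 * n - 2 * q + 1 : ℕ) : ℝ) = 3 * n - 2 * q + 1 := by
      rw [Nat.cast_add, Nat.cast_sub (by omega)]
      push_cast
      ring
    rw [← hcast]
    exact_mod_cast h
  rw [Polynomial.coeff_C_mul, Polynomial.coeff_X_add_one_pow]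
  have hden : (3 * n - 2 * q + 1 : ℝ) ≠ 0 := by
    have : (q : ℝ) ≤ n := by exact_mod_cast hq
    linarith
  have hn0 : (n : ℝ) ≠ 0 := Nat.cast_ne_zero.2 (by omega)
  rw [div_eq_iff hn0, mul_assoc (μ ^ q / _ * _), hchoose]
  field_simp

noncomputable def gloSeries (μ : ℝ) : ℝ⟦X⟧ := mk (alphaCoeff μ)

theorem gloSeries_eq (μ : ℝ) :
    gloSeries μ = 1 + X * (gloSeries μ ^ 4 + C μ * gloSeries μ ^ 2) := by
  obtain ⟨W, hW⟩ := exists_eq_X_mul_aeval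
    ((Polynomial.X + 1) ^ 4 + Polynomial.C μ * (Polynomial.X + 1) ^ 2)
  have hG : gloSeries μ = 1 + W := by
    ext n
    rcases n with _ | n
    · rw [hW]; simp [gloSeries, alphaCoeff]
    · rw [gloSeries, coeff_mk, map_add, coeff_one, if_neg n.succ_ne_zero, zero_add,
        coeff_eq_of_eq_X_mul_aeval hW n.succ_pos, coeff_pow_div_eq_alphaCoeff μ n.succ_pos]
  rw [hG]
  conv_lhs => rw [hW]
  simp only [map_add, map_mul, map_pow, Polynomial.aeval_X, Polynomial.aeval_one,
    Polynomial.aeval_C, PowerSeries.algebraMap_apply, Algebra.algebraMap_self, RingHom.id_apply]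
  ring

section Quartic

variable {μ g : ℝ}

theorem alphaCoeff_zero (μ : ℝ) : alphaCoeff μ 0 = 1 := by
  simp [alphaCoeff]

theorem alphaCoeff_nonneg (hμ : 0 ≤ μ) (n : ℕ) : 0 ≤ alphaCoeff μ n := by
  refine Finset.sum_nonneg fun q hq => ?_
  have : (q : ℝ) ≤ n := by exact_mod_cast Nat.lt_succ_iff.1 (Finset.mem_range.1 hq)
  have : (0 : ℝ) < 3 * n - 2 * q + 1 := by linarith
  positivity

theorem alphaCoeff_succ (μ : ℝ) (n : ℕ) :
    alphaCoeff μ (n + 1) = coeff n (gloSeries μ ^ 4) + μ * coeff n (gloSeries μ ^ 2) := by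
  have h := congrArg (coeff (n + 1)) (gloSeries_eq μ)
  rwa [gloSeries, coeff_mk, ← gloSeries, map_add, coeff_one, if_neg n.succ_ne_zero, zero_add,
    coeff_succ_X_mul, map_add, coeff_C_mul] at h

theorem coeff_gloSeries (μ : ℝ) (n : ℕ) : coeff n (gloSeries μ) = alphaCoeff μ n :=
  coeff_mk n _

theorem coeff_gloSeries_pow_nonneg (hμ : 0 ≤ μ) (k n : ℕ) : 0 ≤ coeff n (gloSeries μ ^ k) := by
  induction k generalizing n with
  | zero => rw [pow_zero, coeff_one]; split_ifs <;> norm_num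
  | succ k ih =>
    rw [pow_succ]
    exact coeff_mul_nonneg ih (fun m => (coeff_gloSeries μ m).symm ▸ alphaCoeff_nonneg hμ m) n

theorem sum_range_succ_alphaCoeff_mul_pow (μ g : ℝ) (N : ℕ) :
    ∑ n ∈ Finset.range (N + 1), alphaCoeff μ n * g ^ n =
      1 + g * (∑ n ∈ Finset.range N, coeff n (gloSeries μ ^ 4) * g ^ n +
        μ * ∑ n ∈ Finset.range N, coeff n (gloSeries μ ^ 2) * g ^ n) := by
  rw [Finset.sum_range_succ', alphaCoeff_zero, pow_zero, mul_one, add_comm, Finset.mul_sum,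
    ← Finset.sum_add_distrib, Finset.mul_sum]
  congr 1
  refine Finset.sum_congr rfl fun n _ => ?_
  rw [alphaCoeff_succ, pow_succ]
  ring

theorem sum_range_alphaCoeff_mul_pow_le (hμ : 0 ≤ μ) (hg : 0 ≤ g) {x : ℝ}
    (hx : 1 + g * (x ^ 4 + μ * x ^ 2) ≤ x) (N : ℕ) :
    ∑ n ∈ Finset.range N, alphaCoeff μ n * g ^ n ≤ x := by
  have hx₀ : 0 ≤ x := by nlinarith [mul_nonneg hg (by positivity : 0 ≤ x ^ 4 + μ * x ^ 2)]
  induction N with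
  | zero => simpa using hx₀
  | succ N ih =>
    have hG : ∀ k, ∀ n, 0 ≤ coeff n (gloSeries μ ^ k) := coeff_gloSeries_pow_nonneg hμ
    set P : ℕ → ℝ := fun k => ∑ n ∈ Finset.range N, coeff n (gloSeries μ ^ k) * g ^ n
    have hP : ∀ k, 0 ≤ P k := fun k =>
      Finset.sum_nonneg fun n _ => mul_nonneg (hG k n) (pow_nonneg hg n)
    have hP1 : P 1 ≤ x := by simpa only [P, pow_one, coeff_gloSeries] using ih
    have hP2 : P 2 ≤ P 1 ^ 2 := by
      simpa only [P, ← pow_two, pow_one] using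
        sum_range_coeff_mul_mul_pow_le (hG 1) (hG 1) hg N
    have hP4 : P 4 ≤ P 2 ^ 2 := by
      have h := sum_range_coeff_mul_mul_pow_le (hG 2) (hG 2) hg N
      rwa [← pow_add, ← pow_two] at h
    rw [sum_range_succ_alphaCoeff_mul_pow]
    have h2 : P 2 ≤ x ^ 2 := hP2.trans (pow_le_pow_left₀ (hP 1) hP1 2)
    have h4 : P 4 ≤ x ^ 4 := hP4.trans (by nlinarith [pow_le_pow_left₀ (hP 2) h2 2])
    calc 1 + g * (P 4 + μ * P 2) ≤ 1 + g * (x ^ 4 + μ * x ^ 2) := by gcongr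
      _ ≤ x := hx

theorem functional_eq_of_hasSum_alphaCoeff_mul_pow {S : ℝ}
    (h : HasSum (fun n => alphaCoeff μ n * g ^ n) S) :
    S = 1 + g * (S ^ 4 + μ * S ^ 2) := by
  have h1 : HasSum (fun n => coeff n (gloSeries μ) * g ^ n) S := by
    simpa only [coeff_gloSeries] using h
  have h2 := hasSum_coeff_mul_mul_pow h1 h1
  have h4 := hasSum_coeff_mul_mul_pow h2 h2
  simp only [← pow_two] at h2 h4
  simp only [← pow_mul, Nat.reduceMul] at h4
  have hshift : HasSum (fun n => alphaCoeff μ (n + 1) * g ^ (n + 1)) (g * (S ^ 4 + μ * S ^ 2)) := by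
    have hterm : (fun n => alphaCoeff μ (n + 1) * g ^ (n + 1)) = fun n =>
        g * (coeff n (gloSeries μ ^ 4) * g ^ n + μ * (coeff n (gloSeries μ ^ 2) * g ^ n)) :=
      funext fun n => by rw [alphaCoeff_succ, pow_succ]; ring
    rw [hterm]
    exact (h4.add (h2.mul_left μ)).mul_left g
  have h0 := (hasSum_nat_add_iff' 1).2 h
  rw [Finset.sum_range_one, alphaCoeff_zero, pow_zero, mul_one] at h0
  linarith [h0.unique hshift]

end Quartic

/-- Solving `G = 1 + g (G⁴ + μ G²)` for `g`: the inverse of `g ↦ G_LO(g, μ)`. -/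
noncomputable def coupling (μ y : ℝ) : ℝ := (y - 1) / (y ^ 4 + μ * y ^ 2)

section Critical

variable {μ Gc : ℝ}

theorem strictMonoOn_coupling (hμ : 0 ≤ μ) (hGc1 : 1 < Gc)
    (hGcRoot : -3 * Gc ^ 3 + 4 * Gc ^ 2 - μ * Gc + 2 * μ = 0) :
    StrictMonoOn (coupling μ) (Set.Icc 1 Gc) := by
  have hD : ∀ y : ℝ, 1 ≤ y → 0 < y ^ 4 + μ * y ^ 2 := fun y hy => by positivity
  refine strictMonoOn_of_deriv_pos (convex_Icc 1 Gc)
    (ContinuousOn.div (by fun_prop) (by fun_prop) fun y hy => (hD y hy.1).ne') fun y hy => ?_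
  obtain ⟨hy1, hyGc⟩ : 1 < y ∧ y < Gc := by rwa [interior_Icc] at hy
  have hderiv : HasDerivAt (coupling μ)
      (y * (-3 * y ^ 3 + 4 * y ^ 2 - μ * y + 2 * μ) / (y ^ 4 + μ * y ^ 2) ^ 2) y := by
    have h := ((hasDerivAt_id y).sub_const 1).div
      ((hasDerivAt_pow 4 y).add ((hasDerivAt_pow 2 y).const_mul μ)) (hD y hy1.le).ne'
    exact h.congr_deriv (by simp only [id, Pi.add_apply]; ring)
  rw [hderiv.deriv]
  refine div_pos ?_ (pow_pos (hD y hy1.le) 2)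
  have hc : -3 * y ^ 3 + 4 * y ^ 2 - μ * y + 2 * μ =
      (Gc - y) * (3 * y ^ 2 + 3 * y * Gc + 3 * Gc ^ 2 - 4 * y - 4 * Gc + μ) := by
    linear_combination hGcRoot
  have hfac : 0 < 3 * y ^ 2 + 3 * y * Gc + 3 * Gc ^ 2 - 4 * y - 4 * Gc + μ := by
    nlinarith [mul_nonneg (by linarith : (0 : ℝ) ≤ 3 * y - 1) (by linarith : (0 : ℝ) ≤ y - 1),
      mul_nonneg (by linarith : (0 : ℝ) ≤ 3 * Gc - 1) (by linarith : (0 : ℝ) ≤ Gc - 1),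
      mul_le_mul hy1.le hGc1.le zero_le_one (by linarith : (0 : ℝ) ≤ y)]
  exact mul_pos (by linarith) (hc ▸ mul_pos (sub_pos.2 hyGc) hfac)

theorem tsum_alphaCoeff_mul_pow_mem_Ico_and_coupling_eq (hμ : 0 ≤ μ) (hGc1 : 1 < Gc) {g : ℝ}
    (hg₀ : 0 ≤ g) (hg : g < coupling μ Gc) :
    ∑' n, alphaCoeff μ n * g ^ n ∈ Set.Ico 1 Gc ∧
      coupling μ (∑' n, alphaCoeff μ n * g ^ n) = g := by
  have hx : 1 + g * (Gc ^ 4 + μ * Gc ^ 2) ≤ Gc := by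
    have := (lt_div_iff₀ (by positivity)).1 hg
    linarith
  have hsum : Summable fun n => alphaCoeff μ n * g ^ n :=
    summable_of_sum_range_le (fun n => mul_nonneg (alphaCoeff_nonneg hμ n) (pow_nonneg hg₀ n))
      (sum_range_alphaCoeff_mul_pow_le hμ hg₀ hx)
  have hSGc := hsum.tsum_le_of_sum_range_le (sum_range_alphaCoeff_mul_pow_le hμ hg₀ hx)
  have hS := functional_eq_of_hasSum_alphaCoeff_mul_pow hsum.hasSum
  set S := ∑' n, alphaCoeff μ n * g ^ n
  have hS1 : 1 ≤ S := by nlinarith [mul_nonneg hg₀ (by positivity : 0 ≤ S ^ 4 + μ * S ^ 2)]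
  have hcS : coupling μ S = g := by
    rw [coupling, div_eq_iff (by positivity)]
    linarith
  refine ⟨⟨hS1, hSGc.lt_of_ne fun h => ?_⟩, hcS⟩
  rw [h] at hcS
  exact hg.ne' hcS

theorem tendsto_tsum_alphaCoeff_mul_pow (hμ : 0 ≤ μ) (hGc1 : 1 < Gc)
    (hGcRoot : -3 * Gc ^ 3 + 4 * Gc ^ 2 - μ * Gc + 2 * μ = 0) :
    Tendsto (fun g => ∑' n, alphaCoeff μ n * g ^ n) (𝓝[<] coupling μ Gc) (𝓝 Gc) := by
  have hmono := strictMonoOn_coupling hμ hGc1 hGcRoot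
  have hGc : Gc ∈ Set.Icc 1 Gc := ⟨hGc1.le, le_rfl⟩
  have hpos : 0 < coupling μ Gc := div_pos (by linarith) (by positivity)
  have hev : ∀ᶠ g in 𝓝[<] coupling μ Gc, ∑' n, alphaCoeff μ n * g ^ n ∈ Set.Ico 1 Gc ∧
      coupling μ (∑' n, alphaCoeff μ n * g ^ n) = g :=
    Filter.mem_of_superset (Ioo_mem_nhdsLT hpos) fun g hg =>
      tsum_alphaCoeff_mul_pow_mem_Ico_and_coupling_eq hμ hGc1 hg.1.le hg.2
  refine tendsto_order.2 ⟨fun a ha => ?_, fun a ha => hev.mono fun g hg => hg.1.2.trans ha⟩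
  have hy : max a 1 ∈ Set.Icc 1 Gc := ⟨le_max_right a 1, (max_lt ha hGc1).le⟩
  filter_upwards [hev, Ioo_mem_nhdsLT (hmono hy hGc (max_lt ha hGc1))] with g hg hgy
  refine (le_max_left a 1).trans_lt ((hmono.lt_iff_lt hy (Set.Ico_subset_Icc_self hg.1)).1 ?_)
  rw [hg.2]
  exact hgy.1

/-- The quadratic in the denominator is
`((Gc - 1) (y⁴ + μ y²) - (y - 1) (Gc⁴ + μ Gc²)) / (Gc - y)²`; the division is exact because `Gc`
is a critical point of `coupling μ`. -/
theorem div_sqrt_one_sub_coupling_div (hμ : 0 ≤ μ) (hGc1 : 1 < Gc)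
    (hGcRoot : -3 * Gc ^ 3 + 4 * Gc ^ 2 - μ * Gc + 2 * μ = 0) {y : ℝ} (hy : 1 ≤ y) (hyGc : y < Gc) :
    (Gc - y) / √(1 - coupling μ y / coupling μ Gc) =
      √((Gc - 1) * (y ^ 4 + μ * y ^ 2) /
        ((Gc - 1) * y ^ 2 + 2 * Gc * (Gc - 1) * y + Gc ^ 2 + μ)) := by
  have hGc : 0 < Gc - 1 := by linarith
  have hQ : 0 < (Gc - 1) * y ^ 2 + 2 * Gc * (Gc - 1) * y + Gc ^ 2 + μ := by positivity
  have hsq : 1 - coupling μ y / coupling μ Gc = (Gc - y) ^ 2 /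
      ((Gc - 1) * (y ^ 4 + μ * y ^ 2) /
        ((Gc - 1) * y ^ 2 + 2 * Gc * (Gc - 1) * y + Gc ^ 2 + μ)) := by
    unfold coupling
    field_simp
    linear_combination (Gc * y - y ^ 2) * hGcRoot
  rw [hsq, Real.sqrt_div' _ (by positivity), Real.sqrt_sq (by linarith),
    div_div_cancel₀ (by linarith)]

end Critical

/-- Square-root singularity of the leading-order two-point function: as
`g → g_c(μ)⁻`, the quotient `(G_c(μ) − S_μ(g)) / √(1 − g/g_c(μ))` tends to
`K(μ) = √(G_c²·(G_c² + μ)/(6G_c² + μ)) > 0`. -/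
theorem GLO_sqrt_singularity (μ : ℝ) (hμ : 0 ≤ μ) (Gc : ℝ) (hGc1 : 1 < Gc)
    (hGcRoot : -3 * Gc ^ 3 + 4 * Gc ^ 2 - μ * Gc + 2 * μ = 0)
    (gc : ℝ) (hgc : gc = (Gc - 1) / (Gc ^ 2 * (Gc ^ 2 + μ)))
    (K : ℝ) (hK : K = Real.sqrt (Gc ^ 2 * (Gc ^ 2 + μ) / (6 * Gc ^ 2 + μ))) :
    0 < K ∧
      Tendsto
        (fun g : ℝ =>
          (Gc - ∑' n : ℕ, alphaCoeff μ n * g ^ n) / Real.sqrt (1 - g / gc))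
        (nhdsWithin gc (Set.Iio gc)) (nhds K) := by
  have hGc : 0 < Gc - 1 := by linarith
  refine ⟨hK ▸ Real.sqrt_pos.2 (by positivity), ?_⟩
  have hgc' : gc = coupling μ Gc := by rw [hgc, coupling]; ring
  set Q : ℝ → ℝ := fun y => (Gc - 1) * y ^ 2 + 2 * Gc * (Gc - 1) * y + Gc ^ 2 + μ
  have hQ : Q Gc = (Gc - 1) * (6 * Gc ^ 2 + μ) := by linear_combination hGcRoot
  have hamp : Tendsto (fun y => √((Gc - 1) * (y ^ 4 + μ * y ^ 2) / Q y)) (𝓝 Gc) (𝓝 K) := by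
    have hcont : ContinuousAt (fun y => √((Gc - 1) * (y ^ 4 + μ * y ^ 2) / Q y)) Gc :=
      ((by fun_prop : Continuous _).continuousAt.div (by fun_prop) (by rw [hQ]; positivity)).sqrt
    convert hcont.tendsto using 2
    rw [hK, hQ]
    congr 1
    field_simp
  rw [hgc']
  refine (hamp.comp (tendsto_tsum_alphaCoeff_mul_pow hμ hGc1 hGcRoot)).congr' ?_
  filter_upwards [Ioo_mem_nhdsLT (div_pos hGc (by positivity) : 0 < coupling μ Gc)] with g hg
  obtain ⟨hS, hcS⟩ := tsum_alphaCoeff_mul_pow_mem_Ico_and_coupling_eq hμ hGc1 hg.1.le hg.2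
  rw [Function.comp_apply, ← div_sqrt_one_sub_coupling_div hμ hGc1 hGcRoot hS.1 hS.2, hcS]
end

section
/- Let μ ≥ 0 be real, let G_c(μ) be the unique real root x > 1 of −3x³ + 4x² − μx + 2μ = 0, and set g_c(μ) = (G_c(μ) − 1)/(G_c(μ)²·(G_c(μ)² + μ)). Then the series ∑_{n=0}^{∞} α_n(μ)·g_c(μ)^n converges and its sum equals G_c(μ). -/
open Finset Nat

/-- The number of plane forests of `m` trees with `p` quartic and `q` quadratic internal
vertices. The `p = q = 0` branch matters only for `m = 0`, where the formula would give `0`. -/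
noncomputable def forestCount (m p q : ℕ) : ℝ :=
  if p = 0 ∧ q = 0 then 1
  else m * (4 * p + 2 * q + m - 1)! / (p ! * q ! * (3 * p + q + m)! : ℕ)

lemma forestCount_nonneg (m p q : ℕ) : 0 ≤ forestCount m p q := by
  unfold forestCount; split_ifs <;> positivity

lemma forestCount_zero_left {p q : ℕ} (hpq : p + q ≠ 0) : forestCount 0 p q = 0 := by
  unfold forestCount; rw [if_neg (by omega)]; simp

lemma forestCount_eq {m p q N K : ℕ} (hN : 4 * p + 2 * q + m = N + 1) (hK : 3 * p + q + m = K) :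
    forestCount m p q = m * N ! / (p ! * q ! * K ! : ℕ) := by
  unfold forestCount
  rw [show 4 * p + 2 * q + m - 1 = N by omega, hK]
  split_ifs with h
  · obtain ⟨rfl, rfl⟩ := h
    obtain ⟨rfl⟩ : m = N + 1 := by omega
    subst hK
    simp [Nat.factorial_succ]
    field_simp
  · rfl

lemma forestCount_succ (M : ℕ) {p q : ℕ} (hpq : p + q ≠ 0) :
    forestCount (M + 1) p q = forestCount M p q
      + (if p = 0 then 0 else forestCount (M + 4) (p - 1) q)
      + (if q = 0 then 0 else forestCount (M + 2) p (q - 1)) := by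
  obtain ⟨X, hX⟩ : ∃ X, 4 * p + 2 * q + M = X + 1 := ⟨4 * p + 2 * q + M - 1, by omega⟩
  obtain ⟨Y, hY⟩ : ∃ Y, 3 * p + q + M = Y := ⟨_, rfl⟩
  have hXr : (X : ℝ) = 4 * p + 2 * q + M - 1 := by
    rw [eq_sub_iff_add_eq]; exact_mod_cast hX.symm
  have hYr : (Y : ℝ) = 3 * p + q + M := by exact_mod_cast hY.symm
  rw [forestCount_eq (N := X + 1) (K := Y + 1) (by omega) (by omega),
    forestCount_eq (N := X) (K := Y) hX hY]
  rcases p with _ | P <;> rcases q with _ | Q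
  · simp at hpq
  -- after clearing denominators: `(M+1)(4p+2q+M) = M(3p+q+M+1) + (M+4)p + (M+2)q`
  all_goals
    simp only [succ_ne_zero, ↓reduceIte, Nat.add_sub_cancel, add_zero]
    repeat rw [forestCount_eq (N := X) (K := Y + 1) (by omega) (by omega)]
    push_cast [Nat.factorial_succ] at hXr hYr ⊢
    field_simp
    rw [hXr, hYr]
    ring

/-- The coefficient of `g^n` in `T(g)^m`. -/
noncomputable def forestCoeff (μ : ℝ) (m n : ℕ) : ℝ :=
  ∑ pq ∈ antidiagonal n, μ ^ pq.2 * forestCount m pq.1 pq.2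

lemma forestCoeff_nonneg {μ : ℝ} (hμ : 0 ≤ μ) (m n : ℕ) : 0 ≤ forestCoeff μ m n :=
  sum_nonneg fun _ _ => mul_nonneg (pow_nonneg hμ _) (forestCount_nonneg _ _ _)

lemma forestCoeff_zero_right (μ : ℝ) (m : ℕ) : forestCoeff μ m 0 = 1 := by
  simp [forestCoeff, forestCount]

lemma forestCoeff_zero_succ (μ : ℝ) (n : ℕ) : forestCoeff μ 0 (n + 1) = 0 :=
  sum_eq_zero fun pq hpq => by
    rw [forestCount_zero_left (by rw [mem_antidiagonal.mp hpq]; omega), mul_zero]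

lemma forestCoeff_succ_succ (μ : ℝ) (M n : ℕ) :
    forestCoeff μ (M + 1) (n + 1) =
      forestCoeff μ M (n + 1) + forestCoeff μ (M + 4) n + μ * forestCoeff μ (M + 2) n := by
  unfold forestCoeff
  rw [sum_congr rfl fun pq hpq => by
    rw [forestCount_succ M (by rw [mem_antidiagonal.mp hpq]; omega)]]
  simp only [mul_add, sum_add_distrib]
  rw [Nat.sum_antidiagonal_succ (f := fun pq => μ ^ pq.2 * ite _ _ _),
    Nat.sum_antidiagonal_succ' (f := fun pq => μ ^ pq.2 * ite _ _ _), mul_sum]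
  simp [pow_succ, mul_comm, mul_assoc]

lemma forestCoeff_one_succ (μ : ℝ) (n : ℕ) :
    forestCoeff μ 1 (n + 1) = forestCoeff μ 4 n + μ * forestCoeff μ 2 n := by
  rw [forestCoeff_succ_succ, forestCoeff_zero_succ, zero_add]

lemma forestCoeff_add (μ : ℝ) (a b n : ℕ) :
    ∑ ij ∈ antidiagonal n, forestCoeff μ a ij.1 * forestCoeff μ b ij.2 =
      forestCoeff μ (a + b) n := by
  induction n using Nat.strong_induction_on generalizing a with
  | _ n ihn =>
  induction a with
  | zero =>
    rcases n with _ | N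
    · simp [forestCoeff_zero_right]
    · simp [Nat.sum_antidiagonal_succ, forestCoeff_zero_right, forestCoeff_zero_succ]
  | succ M ihM =>
    rcases n with _ | N
    · simp [forestCoeff_zero_right]
    rw [Nat.sum_antidiagonal_succ, forestCoeff_zero_right] at ihM ⊢
    simp only [forestCoeff_succ_succ, add_mul, mul_assoc, sum_add_distrib, ← mul_sum,
      ihn N (lt_add_one N)]
    rw [show M + 1 + b = M + b + 1 by omega, forestCoeff_succ_succ, ← ihM,
      show M + 4 + b = M + b + 4 by omega, show M + 2 + b = M + b + 2 by omega]
    ring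

lemma alphaCoeff_eq_forestCoeff (μ : ℝ) (n : ℕ) : alphaCoeff μ n = forestCoeff μ 1 n := by
  rw [alphaCoeff, forestCoeff, ← Nat.sum_antidiagonal_swap]
  simp only [Prod.fst_swap, Prod.snd_swap]
  rw [Nat.sum_antidiagonal_eq_sum_range_succ (fun q p => μ ^ q * forestCount 1 p q)]
  refine sum_congr rfl fun q hq => ?_
  have hqn : q ≤ n := Nat.lt_succ_iff.mp (mem_range.mp hq)
  rw [forestCount_eq (N := 4 * n - 2 * q) (K := 3 * n - 2 * q + 1) (by omega) (by omega),
    Nat.cast_choose ℝ hqn, Nat.cast_choose ℝ (by omega : n ≤ 4 * n - 2 * q),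
    show 4 * n - 2 * q - n = 3 * n - 2 * q by omega, Nat.factorial_succ]
  have hcast : (3 * (n : ℝ) - 2 * q + 1) = ((3 * n - 2 * q : ℕ) : ℝ) + 1 := by
    push_cast [Nat.cast_sub (by omega : 2 * q ≤ 3 * n)]; ring
  rw [hcast]
  push_cast
  field_simp

lemma sum_range_forestCoeff_succ (μ x : ℝ) (M N : ℕ) :
    ∑ n ∈ range (N + 1), forestCoeff μ (M + 1) n * x ^ n =
      ∑ n ∈ range (N + 1), forestCoeff μ M n * x ^ n +
        x * (∑ n ∈ range N, forestCoeff μ (M + 4) n * x ^ n +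
          μ * ∑ n ∈ range N, forestCoeff μ (M + 2) n * x ^ n) := by
  simp only [sum_range_succ' _ N, forestCoeff_succ_succ, forestCoeff_zero_right, add_mul,
    sum_add_distrib, mul_add, mul_sum, pow_succ]
  simp only [mul_comm, mul_assoc, mul_left_comm]
  ring

lemma sum_range_forestCoeff_le {μ x G : ℝ} (hμ : 0 ≤ μ) (hx : 0 ≤ x) (hG : 0 ≤ G)
    (hfix : 1 + x * (G ^ 4 + μ * G ^ 2) = G) (N m : ℕ) :
    ∑ n ∈ range N, forestCoeff μ m n * x ^ n ≤ G ^ m := by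
  induction N generalizing m with
  | zero => simpa using pow_nonneg hG m
  | succ N ihN =>
    induction m with
    | zero => simp [sum_range_succ', forestCoeff_zero_succ, forestCoeff_zero_right]
    | succ M ihM =>
      calc ∑ n ∈ range (N + 1), forestCoeff μ (M + 1) n * x ^ n
          ≤ G ^ M + x * (G ^ (M + 4) + μ * G ^ (M + 2)) := by
            rw [sum_range_forestCoeff_succ]
            gcongr
            exacts [ihN _, ihN _]
        _ = G ^ M * (1 + x * (G ^ 4 + μ * G ^ 2)) := by ring
        _ = G ^ (M + 1) := by rw [hfix, pow_succ]

lemma summable_forestCoeff {μ x G : ℝ} (hμ : 0 ≤ μ) (hx : 0 ≤ x) (hG : 0 ≤ G)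
    (hfix : 1 + x * (G ^ 4 + μ * G ^ 2) = G) (m : ℕ) :
    Summable fun n => forestCoeff μ m n * x ^ n :=
  summable_of_sum_range_le (fun n => mul_nonneg (forestCoeff_nonneg hμ m n) (pow_nonneg hx n))
    fun N => sum_range_forestCoeff_le hμ hx hG hfix N m

noncomputable def forestSeries (μ x : ℝ) (m : ℕ) : ℝ := ∑' n, forestCoeff μ m n * x ^ n

lemma forestSeries_zero (μ x : ℝ) : forestSeries μ x 0 = 1 := by
  rw [forestSeries, tsum_eq_single 0 fun n hn => ?_]
  · simp [forestCoeff_zero_right]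
  · obtain ⟨k, rfl⟩ := Nat.exists_eq_succ_of_ne_zero hn
    rw [forestCoeff_zero_succ, zero_mul]

lemma forestSeries_add {μ x : ℝ} (hμ : 0 ≤ μ) (hx : 0 ≤ x) {a b : ℕ}
    (ha : Summable fun n => forestCoeff μ a n * x ^ n)
    (hb : Summable fun n => forestCoeff μ b n * x ^ n) :
    forestSeries μ x (a + b) = forestSeries μ x a * forestSeries μ x b := by
  have hnonneg m n : 0 ≤ forestCoeff μ m n * x ^ n :=
    mul_nonneg (forestCoeff_nonneg hμ m n) (pow_nonneg hx n)
  rw [forestSeries, forestSeries, forestSeries, ha.tsum_mul_tsum_eq_tsum_sum_antidiagonal hb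
    (ha.mul_of_nonneg hb (hnonneg a) (hnonneg b))]
  refine tsum_congr fun n => ?_
  rw [← forestCoeff_add, sum_mul]
  refine sum_congr rfl fun ij hij => ?_
  rw [← mem_antidiagonal.mp hij, pow_add]
  ring

lemma forestSeries_eq_pow {μ x : ℝ} (hμ : 0 ≤ μ) (hx : 0 ≤ x)
    (hs : ∀ m, Summable fun n => forestCoeff μ m n * x ^ n) (m : ℕ) :
    forestSeries μ x m = forestSeries μ x 1 ^ m := by
  induction m with
  | zero => rw [forestSeries_zero, pow_zero]
  | succ m ih => rw [forestSeries_add hμ hx (hs m) (hs 1), ih, pow_succ]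

lemma forestSeries_one (μ x : ℝ) (hs : ∀ m, Summable fun n => forestCoeff μ m n * x ^ n) :
    forestSeries μ x 1 = 1 + x * (forestSeries μ x 4 + μ * forestSeries μ x 2) := by
  rw [forestSeries, (hs 1).tsum_eq_zero_add, forestCoeff_zero_right]
  have hterm n : forestCoeff μ 1 (n + 1) * x ^ (n + 1) =
      x * (forestCoeff μ 4 n * x ^ n + μ * (forestCoeff μ 2 n * x ^ n)) := by
    rw [forestCoeff_one_succ, pow_succ]; ring
  rw [tsum_congr hterm, tsum_mul_left, (hs 4).tsum_add ((hs 2).mul_left μ), tsum_mul_left,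
    pow_zero, mul_one, forestSeries, forestSeries]

lemma eq_of_doubleRoot {μ x G S : ℝ} (hμ : 0 ≤ μ) (hx : 0 < x) (hG : 0 < G) (hS : 0 ≤ S)
    (hGfix : 1 + x * (G ^ 4 + μ * G ^ 2) = G) (hGcrit : x * (4 * G ^ 3 + 2 * μ * G) = 1)
    (hSfix : 1 + x * (S ^ 4 + μ * S ^ 2) = S) : S = G := by
  have hfactor : x * (S - G) ^ 2 * (S ^ 2 + 2 * S * G + 3 * G ^ 2 + μ) = 0 := by
    linear_combination hSfix + (G - S) * hGcrit - hGfix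
  have hpos : 0 < S ^ 2 + 2 * S * G + 3 * G ^ 2 + μ := by positivity
  have hsq : (S - G) ^ 2 = 0 := by simpa [hx.ne', hpos.ne'] using hfactor
  exact sub_eq_zero.mp (pow_eq_zero_iff two_ne_zero |>.mp hsq)

lemma critical_coupling_spec {μ G g : ℝ} (hμ : 0 ≤ μ) (hG : 1 < G)
    (hroot : -3 * G ^ 3 + 4 * G ^ 2 - μ * G + 2 * μ = 0)
    (hg : g = (G - 1) / (G ^ 2 * (G ^ 2 + μ))) :
    0 < g ∧ 1 + g * (G ^ 4 + μ * G ^ 2) = G ∧ g * (4 * G ^ 3 + 2 * μ * G) = 1 := by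
  have hG0 : 0 < G := by linarith
  have hD : 0 < G ^ 2 * (G ^ 2 + μ) := by positivity
  subst hg
  refine ⟨div_pos (by linarith) hD, ?_, ?_⟩
  · field_simp
    ring
  · field_simp
    linear_combination -hroot

/-- For `μ ≥ 0`, the series `∑ α_n(μ) g_c(μ)^n` converges and its sum equals
the critical value `G_c(μ)`. -/
theorem GLO_at_critical_point (μ : ℝ) (hμ : 0 ≤ μ) (Gc : ℝ) (hGc1 : 1 < Gc)
    (hGcRoot : -3 * Gc ^ 3 + 4 * Gc ^ 2 - μ * Gc + 2 * μ = 0)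
    (gc : ℝ) (hgc : gc = (Gc - 1) / (Gc ^ 2 * (Gc ^ 2 + μ))) :
    Summable (fun n : ℕ => alphaCoeff μ n * gc ^ n) ∧
      (∑' n : ℕ, alphaCoeff μ n * gc ^ n) = Gc := by
  obtain ⟨hgc0, hfix, hcrit⟩ := critical_coupling_spec hμ hGc1 hGcRoot hgc
  have hs := summable_forestCoeff hμ hgc0.le (by linarith) hfix
  have hS := forestSeries_one μ gc hs
  rw [forestSeries_eq_pow hμ hgc0.le hs 4, forestSeries_eq_pow hμ hgc0.le hs 2] at hS
  simp_rw [alphaCoeff_eq_forestCoeff]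
  refine ⟨hs 1, eq_of_doubleRoot hμ hgc0 (by linarith) ?_ hfix hcrit hS.symm⟩
  exact tsum_nonneg fun n => mul_nonneg (forestCoeff_nonneg hμ 1 n) (pow_nonneg hgc0.le n)
end
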